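/- arXiv:0912.0679 — 8 statements merged into one kernel-verified Lean document; each statement's English description precedes it below -/
import Mathlib

section
/- Let k be a field and r a positive integer. Let Z³(C_r,k*) be the group (under pointwise multiplication) of 3-cocycles on the cyclic group C_r of order r with coefficients in k*, and B³(C_r,k*) its subgroup of 3-coboundaries. Then the quotient group H³(C_r,k*) = Z³(C_r,k*)/B³(C_r,k*) is isomorphic, as a group, to μ_r(k) = {α ∈ k* : α^r = 1}. -/
def IsCocycle {k : Type*} [Field k] {G : Type*} [Group G] (φ : G → G → G → kˣ) : Prop :=
  ∀ x y z t : G, φ y z t * φ x (y * z) t * φ x y z = φ (x * y) z t * φ x y (z * t)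

def IsNormalized {k : Type*} [Field k] {G : Type*} [Group G] (φ : G → G → G → kˣ) : Prop :=
  ∀ x z : G, φ x 1 z = 1

def d2 {k : Type*} [Field k] {G : Type*} [Group G] (g : G → G → kˣ) : G → G → G → kˣ :=
  fun x y z => g y z * (g (x * y) z)⁻¹ * g x (y * z) * (g x y)⁻¹

def IsCoboundary {k : Type*} [Field k] {G : Type*} [Group G] (φ : G → G → G → kˣ) : Prop :=
  ∃ g : G → G → kˣ, φ = d2 g

/-- The group of 3-cocycles on `G` with coefficients in `kˣ`, under pointwise
multiplication. -/
def Z3 (k : Type*) [Field k] (G : Type*) [Group G] : Subgroup (G → G → G → kˣ) where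
  carrier := {φ : G → G → G → kˣ | IsCocycle φ}
  one_mem' := by
    show IsCocycle (1 : G → G → G → kˣ)
    intro x y z t
    simp
  mul_mem' := by
    intro a b ha hb
    replace ha : IsCocycle a := ha
    replace hb : IsCocycle b := hb
    show IsCocycle (a * b)
    intro x y z t
    simp only [Pi.mul_apply]
    simpa only [mul_assoc, mul_left_comm, mul_comm] using
      congrArg₂ (· * ·) (ha x y z t) (hb x y z t)
  inv_mem' := by
    intro a ha
    replace ha : IsCocycle a := ha
    show IsCocycle a⁻¹
    intro x y z t
    simp only [Pi.inv_apply]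
    simpa only [mul_inv, mul_assoc, mul_left_comm, mul_comm] using
      congrArg (·⁻¹) (ha x y z t)

/-- The group of 3-coboundaries on `G` with coefficients in `kˣ`. -/
def B3 (k : Type*) [Field k] (G : Type*) [Group G] : Subgroup (G → G → G → kˣ) where
  carrier := {φ : G → G → G → kˣ | IsCoboundary φ}
  one_mem' := by
    show IsCoboundary (1 : G → G → G → kˣ)
    exact ⟨1, by funext x y z; simp [d2]⟩
  mul_mem' := by
    intro a b ha hb
    obtain ⟨g, rfl⟩ : IsCoboundary a := ha
    obtain ⟨h, rfl⟩ : IsCoboundary b := hb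
    show IsCoboundary (d2 g * d2 h)
    refine ⟨g * h, ?_⟩
    funext x y z
    simp only [d2, Pi.mul_apply, mul_inv, mul_assoc, mul_left_comm, mul_comm]
  inv_mem' := by
    intro a ha
    obtain ⟨g, rfl⟩ : IsCoboundary a := ha
    show IsCoboundary (d2 g)⁻¹
    refine ⟨g⁻¹, ?_⟩
    funext x y z
    simp only [d2, Pi.inv_apply, Pi.mul_apply, mul_inv, inv_inv, mul_assoc, mul_left_comm,
      mul_comm]

/-- The third cohomology group `H³(G, kˣ) = Z³(G, kˣ)/B³(G, kˣ)`. -/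
abbrev H3 (k : Type*) [Field k] (G : Type*) [Group G] :=
  Z3 k G ⧸ (B3 k G).subgroupOf (Z3 k G)

/-- `μ_n(k)`, the group of `n`-th roots of unity in `k`. -/
def mu (k : Type*) [Field k] (n : ℕ) : Subgroup kˣ where
  carrier := {α : kˣ | α ^ n = 1}
  one_mem' := by
    show (1 : kˣ) ^ n = 1
    exact one_pow n
  mul_mem' := by
    intro a b ha hb
    show (a * b) ^ n = 1
    rw [mul_pow, show a ^ n = 1 from ha, show b ^ n = 1 from hb, one_mul]
  inv_mem' := by
    intro a ha
    show a⁻¹ ^ n = 1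
    rw [inv_pow, show a ^ n = 1 from ha, inv_one]

/-!
Write `x = σ ^ val x` with `σ` the generator of `C_r` and `0 ≤ val x < r`. For a cocycle `φ`,
`x ↦ ∏_y φ(x, y, σ)` is a homomorphism `C_r → kˣ`, so it is determined by its value `α` at `σ`,
and `α ^ r = 1`; on coboundaries `α = 1`. Conversely, once `φ` is normalized, multiplying the
cocycle identity for `(x, y, σ^j, σ)` over `j < val z` shows that, up to the coboundary of
`(x, y) ↦ ∏_{j < val y} φ(x, σ^j, σ)`, `φ` equals `α ^ (val x * carry y z)`, where `carry y z`
is the carry of `val y + val z` in base `r`. This cochain is a cocycle with invariant `α` for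
every `α ∈ μ_r(k)`, so `φ ↦ α` is a surjection `Z³ → μ_r(k)` with kernel `B³`.
-/

section General

variable {k G : Type*} [Field k] [Group G]

theorem d2_mul (g h : G → G → kˣ) : d2 (g * h) = d2 g * d2 h := by
  funext x y z
  simp only [d2, Pi.mul_apply, mul_inv]
  ac_rfl

theorem isCocycle_d2 (g : G → G → kˣ) : IsCocycle (d2 g) := by
  intro x y z t
  ext
  simp only [d2, mul_assoc, Units.val_mul, Units.val_inv_eq_inv_val]
  field_simp

namespace IsCocycle

variable {φ : G → G → G → kˣ}

theorem apply_mid_one (hφ : IsCocycle φ) (x z : G) : φ x 1 z = φ 1 1 z * φ x 1 1 := by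
  have h := hφ x 1 1 z
  simp only [mul_one, one_mul] at h
  exact mul_left_cancel (a := φ x 1 z) (by rw [← h]; ac_rfl)

theorem apply_one_one_one (hφ : IsCocycle φ) : φ 1 1 1 = 1 := by
  simpa using hφ.apply_mid_one 1 1

theorem apply_right_one (hφ : IsCocycle φ) (hn : IsNormalized φ) (x y : G) : φ x y 1 = 1 := by
  have h := hφ x y 1 1
  rw [hn y 1, hn (x * y) 1] at h
  simp only [mul_one, one_mul] at h
  exact mul_left_cancel (a := φ x y 1) (by rw [h, mul_one])

theorem exists_isNormalized (hφ : IsCocycle φ) :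
    ∃ φ₀ g, IsCocycle φ₀ ∧ IsNormalized φ₀ ∧ φ = φ₀ * d2 g := by
  set g : G → G → kˣ := fun x y => φ 1 1 y * (φ x 1 1)⁻¹
  have hg : ∀ x z, d2 g x 1 z = φ x 1 z := fun x z => by
    simp only [d2, g, mul_one, one_mul, hφ.apply_one_one_one, hφ.apply_mid_one x z]
    group
  refine ⟨φ / d2 g, g, (Z3 k G).div_mem hφ (isCocycle_d2 g), fun x z => ?_, by simp⟩
  simp [hg]

end IsCocycle

variable [Fintype G]

theorem prod_comp_mul_left {M : Type*} [CommMonoid M] (f : G → M) (a : G) :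
    ∏ y, f (a * y) = ∏ y, f y :=
  Equiv.prod_comp (Equiv.mulLeft a) f

theorem prod_comp_mul_right {M : Type*} [CommMonoid M] (f : G → M) (a : G) :
    ∏ y, f (y * a) = ∏ y, f y :=
  Equiv.prod_comp (Equiv.mulRight a) f

theorem prod_d2_eq_one (g : G → G → kˣ) (s t : G) : ∏ y, d2 g s y t = 1 := by
  simp only [d2, Finset.prod_mul_distrib, Finset.prod_inv_distrib]
  rw [prod_comp_mul_left (g · t), prod_comp_mul_right (g s)]
  group

def IsCocycle.sliceHom {φ : G → G → G → kˣ} (hφ : IsCocycle φ) (s : G) : G →* kˣ :=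
  MonoidHom.mk' (fun x => ∏ y, φ x y s) fun x x' => by
    -- in the product of the identities, `y ↦ x' * y` and `y ↦ y * s` permute the factors
    have h := Finset.prod_congr rfl fun y (_ : y ∈ Finset.univ) => hφ x x' y s
    simp only [Finset.prod_mul_distrib] at h
    rw [prod_comp_mul_left (φ x · s), prod_comp_mul_right (φ x x')] at h
    exact mul_right_cancel (h.symm.trans (by ac_rfl))

end General

namespace CyclicCohomology

open Finset Multiplicative

variable {k : Type*} [Field k] {r : ℕ}

local notation "C_ " r:max => Multiplicative (ZMod r)

local notation "Cochain " k:max r:max => C_ r → C_ r → C_ r → kˣ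

variable (r) in
def gen : C_ r := ofAdd 1

def val (x : C_ r) : ℕ := (toAdd x).val

/-- The carry (`0` or `1`) of the addition `val y + val z` in base `r`. -/
def carry (y z : C_ r) : ℕ := (val y + val z) / r

/-- The standard cocycle representing the class in `H³(C_r, kˣ)` that corresponds to `α`. -/
def psi (α : kˣ) (x y z : C_ r) : kˣ := α ^ (val x * carry y z)

theorem gen_pow (n : ℕ) : gen r ^ n = ofAdd (n : ZMod r) := by
  rw [gen, ← ofAdd_nsmul, nsmul_one]

theorem gen_pow_card : gen r ^ r = 1 := by
  rw [gen_pow, ZMod.natCast_self, ofAdd_zero]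

theorem val_gen_pow {n : ℕ} (hn : n < r) : val (gen r ^ n) = n := by
  rw [gen_pow, val, toAdd_ofAdd, ZMod.val_natCast_of_lt hn]

theorem psi_one : psi (1 : kˣ) = (1 : Cochain k r) := by
  funext x y z
  simp [psi]

variable [NeZero r]

theorem gen_pow_val (x : C_ r) : gen r ^ val x = x := by
  rw [gen_pow, val, ZMod.natCast_zmod_val, ofAdd_toAdd]

theorem val_add_val (y z : C_ r) :
    val y + val z = val (y * z) + r * carry y z := by
  rw [val, val, val, toAdd_mul, ZMod.val_add, carry, val, val, Nat.mod_add_div]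

theorem carry_add_carry (y z t : C_ r) :
    carry y z + carry (y * z) t = carry z t + carry y (z * t) := by
  have h₁ := val_add_val y z
  have h₂ := val_add_val (y * z) t
  have h₃ := val_add_val z t
  have h₄ := val_add_val y (z * t)
  rw [← mul_assoc] at h₄
  exact Nat.eq_of_mul_eq_mul_left (NeZero.pos r) (by linarith)

theorem prod_range_gen_pow {M : Type*} [CommMonoid M] (f : C_ r → M) :
    ∏ j ∈ range r, f (gen r ^ j) = ∏ y, f y :=
  prod_nbij' (gen r ^ ·) val (by simp) (fun x _ => mem_range.2 (ZMod.val_lt _))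
    (fun j hj => val_gen_pow (mem_range.1 hj)) (fun x _ => gen_pow_val x) (fun _ _ => rfl)

theorem prod_range_card_mul {M : Type*} [CommMonoid M] (f : C_ r → M)
    (m c : ℕ) : ∏ j ∈ range (r * c), f (gen r ^ (m + j)) = (∏ y, f y) ^ c := by
  induction c with
  | zero => simp
  | succ c ih =>
    rw [mul_add_one, prod_range_add, ih, pow_succ]
    congr 1
    simp_rw [← add_assoc, pow_add _ (m + r * c)]
    rw [prod_range_gen_pow (fun y => f (gen r ^ (m + r * c) * y)), prod_comp_mul_left]

theorem isCocycle_psi {α : kˣ} (hα : α ^ r = 1) : IsCocycle (psi α : Cochain k r) := by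
  intro x y z t
  simp only [psi, ← pow_add]
  have hexp : val y * carry z t + val x * carry (y * z) t + val x * carry y z
      = val (x * y) * carry z t + val x * carry y (z * t) + r * (carry x y * carry z t) := by
    have h₁ := carry_add_carry y z t
    have h₂ := val_add_val x y
    zify at h₁ h₂ ⊢
    linear_combination (val x : ℤ) * h₁ + (carry z t : ℤ) * h₂
  rw [hexp, pow_add, pow_mul, hα, one_pow, mul_one]

variable (r) in
/-- On cocycles this induces the isomorphism `H³(C_r, kˣ) ≃ μ_r(k)`. -/
def invariant (φ : Cochain k r) : kˣ :=
  ∏ y, φ (gen r) y (gen r)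

theorem invariant_mul (φ ψ : Cochain k r) :
    invariant r (φ * ψ) = invariant r φ * invariant r ψ :=
  prod_mul_distrib

theorem invariant_d2 (g : C_ r → C_ r → kˣ) : invariant r (d2 g) = 1 :=
  prod_d2_eq_one g _ _

theorem invariant_psi {α : kˣ} (hα : α ^ r = 1) : invariant r (psi α) = α := by
  obtain ⟨n, rfl⟩ : ∃ n, r = n + 1 := Nat.exists_eq_add_one.2 (NeZero.pos r)
  rcases n.eq_zero_or_pos with rfl | hn
  · rw [pow_one] at hα
    simp [hα, psi_one, invariant]
  have hval : val (gen (n + 1)) = 1 := by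
    simpa using val_gen_pow (r := n + 1) (n := 1) (by omega)
  have hcarry : ∀ j < n + 1, carry (gen (n + 1) ^ j) (gen (n + 1)) = (j + 1) / (n + 1) := by
    intro j hj
    rw [carry, val_gen_pow hj, hval]
  rw [invariant, ← prod_range_gen_pow, prod_range_succ, prod_eq_one, one_mul]
  · simp [psi, hval, hcarry]
  · intro j hj
    rw [mem_range] at hj
    simp [psi, hval, hcarry j (by omega), Nat.div_eq_of_lt (show j + 1 < n + 1 by omega)]

section Cocycle

variable {φ : Cochain k r}

theorem sliceHom_gen (hφ : IsCocycle φ) (x : C_ r) :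
    hφ.sliceHom (gen r) x = invariant r φ ^ val x := by
  conv_lhs => rw [← gen_pow_val x]
  rw [map_pow]
  rfl

theorem invariant_pow_card (hφ : IsCocycle φ) : invariant r φ ^ r = 1 := by
  calc invariant r φ ^ r = hφ.sliceHom (gen r) (gen r ^ r) :=
        (map_pow (hφ.sliceHom (gen r)) _ _).symm
    _ = 1 := by rw [gen_pow_card, map_one]

def cochain (φ : Cochain k r) (x y : C_ r) : kˣ :=
  ∏ j ∈ range (val y), φ x (gen r ^ j) (gen r)

theorem eq_psi_mul_d2_cochain (hφ : IsCocycle φ) (hn : IsNormalized φ) :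
    φ = psi (invariant r φ) * d2 (cochain φ) := by
  funext x y z
  set F : ℕ → kˣ := fun j => φ x (gen r ^ j) (gen r)
  have h₁ : cochain φ y z * ∏ j ∈ range (val z), F (val y + j)
      = cochain φ (x * y) z * φ x y z := by
    have hj : ∀ j, φ y (gen r ^ j) (gen r) * F (val y + j)
        = φ (x * y) (gen r ^ j) (gen r) * (φ x y (gen r ^ (j + 1)) / φ x y (gen r ^ j)) := by
      intro j
      have h := hφ x y (gen r ^ j) (gen r)
      rw [← gen_pow_val y, ← pow_add, gen_pow_val, ← pow_succ] at h
      rw [← mul_div_assoc, eq_div_iff_mul_eq', h]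
    -- the factors `φ x y (σ^j)` telescope
    rw [cochain, cochain, ← prod_mul_distrib, prod_congr rfl fun j _ => hj j, prod_mul_distrib,
      prod_range_div (φ x y <| gen r ^ ·), pow_zero, hφ.apply_right_one hn, div_one, gen_pow_val]
  have h₂ : cochain φ x y * ∏ j ∈ range (val z), F (val y + j)
      = cochain φ x (y * z) * invariant r φ ^ (val x * carry y z) := by
    rw [cochain, cochain, ← prod_range_add, val_add_val, prod_range_add,
      prod_range_card_mul (φ x · (gen r)), pow_mul, ← sliceHom_gen hφ]
    rfl
  rw [eq_div_of_mul_eq'' h₁.symm, eq_div_of_mul_eq'' h₂]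
  simp only [Pi.mul_apply, psi, d2, div_eq_mul_inv]
  ac_rfl

theorem exists_eq_psi_mul_d2 (hφ : IsCocycle φ) : ∃ g, φ = psi (invariant r φ) * d2 g := by
  obtain ⟨φ₀, g₀, hφ₀, hn, rfl⟩ := hφ.exists_isNormalized
  refine ⟨cochain φ₀ * g₀, ?_⟩
  rw [invariant_mul, invariant_d2, mul_one, d2_mul, ← mul_assoc,
    ← eq_psi_mul_d2_cochain hφ₀ hn]

end Cocycle

variable (k r) in
def invariantHom : Z3 k (C_ r) →* mu k r :=
  MonoidHom.mk' (fun φ => ⟨invariant r φ, invariant_pow_card φ.2⟩) fun φ ψ =>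
    Subtype.ext (invariant_mul (r := r) φ.1 ψ.1)

theorem invariantHom_apply (φ : Z3 k (C_ r)) : (invariantHom k r φ : kˣ) = invariant r φ := rfl

theorem ker_invariantHom : (invariantHom k r).ker = (B3 k (C_ r)).subgroupOf (Z3 k (C_ r)) := by
  ext ⟨φ, hφ⟩
  rw [MonoidHom.mem_ker, Subgroup.mem_subgroupOf, Subtype.ext_iff, invariantHom_apply]
  constructor
  · intro h
    obtain ⟨g, hg⟩ := exists_eq_psi_mul_d2 hφ
    rw [h, OneMemClass.coe_one, psi_one, one_mul] at hg
    exact ⟨g, hg⟩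
  · rintro ⟨g, rfl⟩
    exact invariant_d2 g

theorem invariantHom_surjective : Function.Surjective (invariantHom k r) :=
  fun α => ⟨⟨psi (α : kˣ), isCocycle_psi α.2⟩,
    Subtype.ext ((invariantHom_apply _).trans (invariant_psi α.2))⟩

end CyclicCohomology

theorem statement2 (k : Type*) [Field k] (r : ℕ) (hr : 0 < r) :
    Nonempty (H3 k (Multiplicative (ZMod r)) ≃* mu k r) := by
  have : NeZero r := ⟨hr.ne'⟩
  exact ⟨(QuotientGroup.quotientMulEquivOfEq CyclicCohomology.ker_invariantHom.symm).trans
    (QuotientGroup.quotientKerEquivOfSurjective _ CyclicCohomology.invariantHom_surjective)⟩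
end

section
/- Let k be a field of characteristic different from 2 and let φ be a normalized 3-cocycle on the Klein four-group C₂×C₂ with coefficients in k*. Then for every permutation (u,v,w) of (σ,τ,ρ) the following relations hold: (1) φ(w,v,v) = ε_v·φ(u,v,v); (2) φ(v,v,w) = ε_v·φ(v,v,u); (3) φ(v,w,v)·φ(v,u,v) = ε_v; (4) φ(u,v,v)·φ(u,u,v)·φ(u,w,v) = 1; (5) φ(v,u,v)·φ(u,v,u)·φ(u,w,v) = φ(w,u,v)·φ(u,v,w); (6) φ(u,v,v)·φ(v,v,u) = φ(w,v,u)·φ(u,v,w); (7) ε_u·φ(v,w,u)·φ(u,v,w) = φ(w,w,u)·φ(u,v,v); (8) φ(v,w,v)·φ(u,u,v)·φ(u,v,w) = φ(w,w,v)·φ(u,v,u); (9) φ(v,w,w)·φ(u,u,w)·φ(u,v,w) = ε_w. -/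
/-- The Klein four-group `C₂ × C₂`, written multiplicatively. -/
abbrev K : Type := Multiplicative (ZMod 2 × ZMod 2)

def σ : K := Multiplicative.ofAdd (1, 0)
def τ : K := Multiplicative.ofAdd (0, 1)
def ρ : K := Multiplicative.ofAdd (1, 1)

namespace IsCocycle

variable {k : Type*} [Field k] {G : Type*} [Group G] {φ : G → G → G → kˣ}

theorem apply_one_left (hc : IsCocycle φ) (hn : IsNormalized φ) (y z : G) : φ 1 y z = 1 := by
  have h := hc 1 1 y z
  simp only [one_mul, hn 1, mul_one] at h
  exact mul_eq_left.mp h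

theorem apply_one_right (hc : IsCocycle φ) (hn : IsNormalized φ) (x y : G) : φ x y 1 = 1 := by
  have h := hc x y 1 1
  simp only [mul_one, hn y, hn (x * y), one_mul] at h
  exact mul_eq_left.mp h

theorem relations_of_commuting_involutions (hc : IsCocycle φ) (hn : IsNormalized φ) {u v w : G}
    (hu : u * u = 1) (hv : v * v = 1) (hcomm : u * v = v * u) (huv : u * v = w) :
      φ w v v = φ v v v * φ u v v ∧
      φ v v w = φ v v v * φ v v u ∧
      φ v w v * φ v u v = φ v v v ∧
      φ u v v * φ u u v * φ u w v = 1 ∧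
      φ v u v * φ u v u * φ u w v = φ w u v * φ u v w ∧
      φ u v v * φ v v u = φ w v u * φ u v w ∧
      φ u u u * φ v w u * φ u v w = φ w w u * φ u v v ∧
      φ v w v * φ u u v * φ u v w = φ w w v * φ u v u ∧
      φ v w w * φ u u w * φ u v w = φ w w w := by
  have hvu : v * u = w := hcomm ▸ huv
  have hwv : w * v = u := by rw [← huv, mul_assoc, hv, mul_one]
  have hvw : v * w = u := by rw [← hvu, ← mul_assoc, hv, one_mul]
  have hwu : w * u = v := by rw [← hvu, mul_assoc, hu, mul_one]
  have hww : w * w = 1 := by nth_rw 2 [← huv]; rw [← mul_assoc, hwu, hv]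
  have c_uvvv := hc u v v v
  have c_vuvv := hc v u v v
  have c_vvuv := hc v v u v
  have c_uuvv := hc u u v v
  have c_uvuv := hc u v u v
  have c_uvvu := hc u v v u
  have c_uvwu := hc u v w u
  have c_uvwv := hc u v w v
  have c_uvww := hc u v w w
  simp only [hu, hv, hww, huv, hvu, hvw, hwv, hwu, hn u, hc.apply_one_left hn,
    hc.apply_one_right hn, one_mul, mul_one]
    at c_uvvv c_vuvv c_vvuv c_uuvv c_uvuv c_uvvu c_uvwu c_uvwv c_uvww
  have hεv : φ v w v * φ v u v = φ v v v :=
    mul_left_cancel (a := φ u v v) (by rw [← mul_assoc, c_vuvv, ← c_uvvv, mul_comm])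
  refine ⟨c_uvvv.symm, ?_, hεv, ?_, ?_, ?_, ?_, c_uvwv, c_uvww⟩
  · rw [← c_vvuv, ← hεv, mul_comm (φ v w v)]
  · rw [← c_uuvv]; ac_rfl
  · rw [← c_uvuv]; ac_rfl
  · rw [← c_uvvu]; ac_rfl
  · rw [← c_uvwu]; ac_rfl

end IsCocycle

theorem statement4_general {k : Type*} [Field k]
    (φ : K → K → K → kˣ) (hc : IsCocycle φ) (hn : IsNormalized φ) :
    ∀ u v w : K, List.Perm [u, v, w] [σ, τ, ρ] →
      φ w v v = φ v v v * φ u v v ∧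
      φ v v w = φ v v v * φ v v u ∧
      φ v w v * φ v u v = φ v v v ∧
      φ u v v * φ u u v * φ u w v = 1 ∧
      φ v u v * φ u v u * φ u w v = φ w u v * φ u v w ∧
      φ u v v * φ v v u = φ w v u * φ u v w ∧
      φ u u u * φ v w u * φ u v w = φ w w u * φ u v v ∧
      φ v w v * φ u u v * φ u v w = φ w w v * φ u v u ∧
      φ v w w * φ u u w * φ u v w = φ w w w := by
  intro u v w hp
  have hsq : ∀ x : K, x * x = 1 := by decide
  have hprod : u * v * w = 1 := by simpa [mul_assoc] using hp.prod_eq.trans (by decide)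
  exact hc.relations_of_commuting_involutions hn (hsq u) (hsq v) (mul_comm u v)
    ((mul_eq_one_iff_eq_inv.mp hprod).trans (inv_eq_of_mul_eq_one_right (hsq w)))

theorem statement4 {k : Type*} [Field k] (hk : ringChar k ≠ 2)
    (φ : K → K → K → kˣ) (hc : IsCocycle φ) (hn : IsNormalized φ) :
    ∀ u v w : K, List.Perm [u, v, w] [σ, τ, ρ] →
      φ w v v = φ v v v * φ u v v ∧
      φ v v w = φ v v v * φ v v u ∧
      φ v w v * φ v u v = φ v v v ∧
      φ u v v * φ u u v * φ u w v = 1 ∧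
      φ v u v * φ u v u * φ u w v = φ w u v * φ u v w ∧
      φ u v v * φ v v u = φ w v u * φ u v w ∧
      φ u u u * φ v w u * φ u v w = φ w w u * φ u v v ∧
      φ v w v * φ u u v * φ u v w = φ w w v * φ u v u ∧
      φ v w w * φ u u w * φ u v w = φ w w w :=
  statement4_general φ hc hn
end

section
/- Let k be a field of characteristic different from 2 and let φ be a normalized 3-cocycle on the Klein four-group C₂×C₂ with coefficients in k*. Set p = φ(σ,τ,ρ)·φ(τ,ρ,σ)·φ(ρ,σ,τ) and q = φ(ρ,τ,σ)·φ(σ,ρ,τ)·φ(τ,σ,ρ). Then p = q = ε_σ·ε_τ·ε_ρ, and in particular p² = 1. -/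
namespace IsCocycle

variable {k : Type*} [Field k] {G : Type*} [Group G] {φ : G → G → G → kˣ}

theorem apply_self_sq_of_mul_self_eq_one (hc : IsCocycle φ) (hn : IsNormalized φ) {x : G}
    (hx : x * x = 1) : φ x x x ^ 2 = 1 := by
  have h := hc x x x x
  simp only [hx, hn x x, mul_one, hc.apply_one_left hn, hc.apply_one_right hn] at h
  exact pow_two (φ x x x) ▸ h

end IsCocycle

theorem σ_mul_σ : σ * σ = 1 := by decide
theorem τ_mul_τ : τ * τ = 1 := by decide
theorem ρ_mul_ρ : ρ * ρ = 1 := by decide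
theorem σ_mul_τ : σ * τ = ρ := by decide
theorem τ_mul_σ : τ * σ = ρ := by decide
theorem τ_mul_ρ : τ * ρ = σ := by decide
theorem ρ_mul_σ : ρ * σ = τ := by decide
theorem ρ_mul_τ : ρ * τ = σ := by decide

namespace IsCocycle

variable {k : Type*} [Field k] {φ : K → K → K → kˣ}

theorem klein_cyclic_eq_reverse_cyclic (hc : IsCocycle φ) :
    φ σ τ ρ * φ τ ρ σ * φ ρ σ τ = φ ρ τ σ * φ σ ρ τ * φ τ σ ρ := by
  have h₁ := hc σ τ σ τ
  have h₂ := hc τ σ τ σ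
  simp only [σ_mul_τ, τ_mul_σ] at h₁ h₂
  calc φ σ τ ρ * φ τ ρ σ * φ ρ σ τ = φ τ ρ σ * (φ ρ σ τ * φ σ τ ρ) := by ac_rfl
    _ = φ τ ρ σ * (φ τ σ τ * φ σ ρ τ * φ σ τ σ) := by rw [h₁]
    _ = φ σ ρ τ * (φ σ τ σ * φ τ ρ σ * φ τ σ τ) := by ac_rfl
    _ = φ σ ρ τ * (φ ρ τ σ * φ τ σ ρ) := by rw [h₂]
    _ = φ ρ τ σ * φ σ ρ τ * φ τ σ ρ := by ac_rfl

theorem klein_cyclic_mul_apply_σσσ (hc : IsCocycle φ) (hn : IsNormalized φ) :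
    φ σ τ ρ * φ τ ρ σ * φ ρ σ τ * φ σ σ σ = φ τ τ τ * φ ρ ρ ρ := by
  have h₁ := hc σ τ ρ σ
  have h₂ := hc ρ σ τ τ
  have h₃ := hc ρ ρ ρ τ
  simp only [σ_mul_τ, τ_mul_ρ, ρ_mul_σ, τ_mul_τ, ρ_mul_ρ, ρ_mul_τ, hn ρ τ, hc.apply_one_left hn,
    hc.apply_one_right hn, mul_one, one_mul] at h₁ h₂ h₃
  calc φ σ τ ρ * φ τ ρ σ * φ ρ σ τ * φ σ σ σ
        = φ τ ρ σ * φ σ σ σ * φ σ τ ρ * φ ρ σ τ := by ac_rfl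
    _ = φ ρ ρ σ * φ σ τ τ * φ ρ σ τ := by rw [h₁]
    _ = φ ρ ρ τ * φ ρ ρ ρ * φ σ τ τ * φ ρ σ τ := by rw [← h₃]
    _ = φ σ τ τ * φ ρ ρ τ * φ ρ σ τ * φ ρ ρ ρ := by ac_rfl
    _ = φ τ τ τ * φ ρ ρ ρ := by rw [h₂]

end IsCocycle

theorem statement5_general {k : Type*} [Field k]
    (φ : K → K → K → kˣ) (hc : IsCocycle φ) (hn : IsNormalized φ)
    (p q : kˣ)
    (hp : p = φ σ τ ρ * φ τ ρ σ * φ ρ σ τ)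
    (hq : q = φ ρ τ σ * φ σ ρ τ * φ τ σ ρ) :
    p = q ∧ p = φ σ σ σ * φ τ τ τ * φ ρ ρ ρ ∧ p ^ 2 = 1 := by
  have hσ := hc.apply_self_sq_of_mul_self_eq_one hn σ_mul_σ
  have hτ := hc.apply_self_sq_of_mul_self_eq_one hn τ_mul_τ
  have hρ := hc.apply_self_sq_of_mul_self_eq_one hn ρ_mul_ρ
  have hpε : p = φ σ σ σ * φ τ τ τ * φ ρ ρ ρ := by
    calc p = p * φ σ σ σ * φ σ σ σ := by rw [mul_assoc, ← pow_two, hσ, mul_one]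
      _ = φ σ σ σ * φ τ τ τ * φ ρ ρ ρ := by
        rw [hp, hc.klein_cyclic_mul_apply_σσσ hn]; ac_rfl
  refine ⟨hp.trans (hc.klein_cyclic_eq_reverse_cyclic.trans hq.symm), hpε, ?_⟩
  rw [hpε, mul_pow, mul_pow, hσ, hτ, hρ, one_mul, one_mul]

theorem statement5 {k : Type*} [Field k] (hk : ringChar k ≠ 2)
    (φ : K → K → K → kˣ) (hc : IsCocycle φ) (hn : IsNormalized φ)
    (p q : kˣ)
    (hp : p = φ σ τ ρ * φ τ ρ σ * φ ρ σ τ)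
    (hq : q = φ ρ τ σ * φ σ ρ τ * φ τ σ ρ) :
    p = q ∧ p = φ σ σ σ * φ τ τ τ * φ ρ ρ ρ ∧ p ^ 2 = 1 :=
  statement5_general φ hc hn p q hp hq
end

section
/- Let k be a field of characteristic different from 2 and let φ: (C₂×C₂)³ → k* be a function satisfying: φ(x,y,z)=1 whenever one of x,y,z equals e; ε_x := φ(x,x,x) ∈ {1,−1} for each x ∈ {σ,τ,ρ}; and φ(x,y,z) = p := ε_σ·ε_τ·ε_ρ whenever (x,y,z) is a permutation of (σ,τ,ρ). Then φ is a 3-cocycle on C₂×C₂ with coefficients in k* if and only if for every permutation (u,v,w) of (σ,τ,ρ) the following six relations hold: φ(w,v,v) = ε_v·φ(u,v,v); φ(v,v,w) = ε_v·φ(v,v,u); φ(v,w,v)·φ(v,u,v) = ε_v; φ(u,v,v)·φ(u,u,v) = p; φ(v,u,v)·φ(u,v,u) = p; φ(u,v,v)·φ(v,v,u) = 1. -/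
/-! The forward direction only uses that `C₂ × C₂` has exponent two: after normalisation, the six
relations are the cocycle identity at the quadruples `(u,v,v,v)`, `(v,v,v,u)`, `(v,v,w,v)`,
`(u,u,v,v)`, `(v,u,v,u)` and `(u,v,v,u)`. Conversely, the relations express every value of `φ`
through `φ(σ,τ,τ)`, `φ(τ,σ,τ)` and the signs `ε`, and the cocycle identity then becomes, on each of
the `4⁴` quadruples, an identity in the commutative group `kˣ` that only needs `ε² = 1`. -/

theorem IsCocycle.relations_of_exponent_two {k : Type*} [Field k] {G : Type*} [Group G]
    (hG : Monoid.exponent G = 2) {φ : G → G → G → kˣ} (hφ : IsCocycle φ)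
    (h1 : ∀ x y z : G, (x = 1 ∨ y = 1 ∨ z = 1) → φ x y z = 1)
    {u v w : G} (huv : u * v = w) {p : kˣ} (hp : p * p = 1)
    (hv : φ v v v * φ v v v = 1) (harr : ∀ x y z : G, [x, y, z].Perm [u, v, w] → φ x y z = p) :
    φ w v v = φ v v v * φ u v v ∧
    φ v v w = φ v v v * φ v v u ∧
    φ v w v * φ v u v = φ v v v ∧
    φ u v v * φ u u v = p ∧
    φ v u v * φ u v u = p ∧
    φ u v v * φ v v u = 1 := by
  have sq (g : G) : g * g = 1 := by
    rw [mul_eq_one_iff_eq_inv, inv_eq_self_of_exponent_two hG]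
  have hvu : v * u = w := mul_comm_of_exponent_two hG v u ▸ huv
  have hvw : v * w = u := by rw [← huv, mul_comm_of_exponent_two hG u v, ← mul_assoc, sq, one_mul]
  have hwv : w * v = u := mul_comm_of_exponent_two hG v w ▸ hvw
  have huwv : φ u w v = p := harr u w v (.cons u (.swap v w []))
  have hvuw : φ v u w = p := harr v u w (.swap u v [w])
  have hvwu : φ v w u = p := harr v w u (List.perm_append_singleton u [v, w])
  have hwvu : φ w v u = p := harr w v u (List.reverse_perm [u, v, w])
  have huvw : φ u v w = p := harr u v w (.refl _)
  have n1 (y z : G) : φ 1 y z = 1 := h1 _ _ _ (.inl rfl)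
  have n2 (x z : G) : φ x 1 z = 1 := h1 _ _ _ (.inr (.inl rfl))
  have n3 (x y : G) : φ x y 1 = 1 := h1 _ _ _ (.inr (.inr rfl))
  have c1 := hφ u v v v
  have c2 := hφ v v v u
  have c3 := hφ v v w v
  have c4 := hφ u u v v
  have c5 := hφ v u v u
  have c6 := hφ u v v u
  simp only [sq, huv, hvu, hvw, hwv, n1, n2, n3, one_mul, mul_one, huwv, hvuw, hvwu, hwvu, huvw]
    at c1 c2 c3 c4 c5 c6
  have r2 : φ v v w = φ v v v * φ v v u := by rw [← c2, mul_comm]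
  refine ⟨c1.symm, r2, ?_, ?_, ?_, by rw [mul_comm, c6, hp]⟩
  · rw [r2] at c3
    exact mul_right_cancel (b := φ v v v * φ v v u) (by rw [c3, ← mul_assoc, hv, one_mul])
  · exact mul_right_cancel (b := p) (by rw [hp, mul_right_comm, c4])
  · exact mul_right_cancel (b := p) (by rw [mul_comm (φ v u v), mul_right_comm, c5])

theorem K.eq_one_or_eq_σ_or_eq_τ_or_eq_ρ : ∀ g : K, g = 1 ∨ g = σ ∨ g = τ ∨ g = ρ := by decide

theorem K.mul_eq_of_perm : ∀ {u v w : K}, [u, v, w].Perm [σ, τ, ρ] → u * v = w := by decide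

set_option maxHeartbeats 1000000 in
theorem isCocycle_of_relations {k : Type*} [Field k] {φ : K → K → K → kˣ}
    (h1 : ∀ x y z : K, (x = 1 ∨ y = 1 ∨ z = 1) → φ x y z = 1)
    (hε : ∀ x : K, φ x x x * φ x x x = 1)
    (h3 : ∀ x y z : K, List.Perm [x, y, z] [σ, τ, ρ] →
      φ x y z = φ σ σ σ * φ τ τ τ * φ ρ ρ ρ)
    (H : ∀ u v w : K, List.Perm [u, v, w] [σ, τ, ρ] →
        φ w v v = φ v v v * φ u v v ∧
        φ v v w = φ v v v * φ v v u ∧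
        φ v w v * φ v u v = φ v v v ∧
        φ u v v * φ u u v = φ σ σ σ * φ τ τ τ * φ ρ ρ ρ ∧
        φ v u v * φ u v u = φ σ σ σ * φ τ τ τ * φ ρ ρ ρ ∧
        φ u v v * φ v v u = 1) :
    IsCocycle φ := by
  have hε_inv (x : K) : (φ x x x)⁻¹ = φ x x x := inv_eq_of_mul_eq_one_right (hε x)
  have hε_cancel (x : K) (a : kˣ) : φ x x x * (φ x x x * a) = a := by
    rw [← mul_assoc, hε, one_mul]
  -- Solve the relations for every off-diagonal value other than `φ σ τ τ` and `φ τ σ τ`.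
  obtain ⟨hρττ, hττρ, hτρτ, hσττ_σστ, hτστ_στσ, hσττ_ττσ⟩ := H σ τ ρ (by decide)
  obtain ⟨hρσσ, hσσρ, hσρσ, hτσσ_ττσ, -, -⟩ := H τ σ ρ (by decide)
  obtain ⟨hσρρ, hρρσ, -, -, -, hτρρ_ρρτ⟩ := H τ ρ σ (by decide)
  obtain ⟨-, -, -, hρττ_ρρτ, -, -⟩ := H ρ τ σ (by decide)
  obtain ⟨-, -, hρτρ, -, hρσρ_σρσ, -⟩ := H σ ρ τ (by decide)
  replace hτρτ := eq_mul_inv_of_mul_eq hτρτ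
  have hσστ := eq_inv_mul_of_mul_eq hσττ_σστ
  have hστσ := eq_inv_mul_of_mul_eq hτστ_στσ
  have hττσ := eq_inv_of_mul_eq_one_right hσττ_ττσ
  replace hσρσ := eq_mul_inv_of_mul_eq hσρσ
  have hτσσ := eq_mul_inv_of_mul_eq hτσσ_ττσ
  have hτρρ := eq_inv_of_mul_eq_one_left hτρρ_ρρτ
  have hρρτ := eq_inv_mul_of_mul_eq hρττ_ρρτ
  have hρσρ := eq_mul_inv_of_mul_eq hρσρ_σρσ
  replace hρτρ := eq_mul_inv_of_mul_eq hρτρ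
  obtain ⟨hστ, hτσ, hσρ, hρσ, hτρ, hρτ⟩ :
      σ * τ = ρ ∧ τ * σ = ρ ∧ σ * ρ = τ ∧ ρ * σ = τ ∧ τ * ρ = σ ∧ ρ * τ = σ := by decide
  intro x y z t
  rcases K.eq_one_or_eq_σ_or_eq_τ_or_eq_ρ x with rfl | rfl | rfl | rfl <;>
    rcases K.eq_one_or_eq_σ_or_eq_τ_or_eq_ρ y with rfl | rfl | rfl | rfl <;>
    rcases K.eq_one_or_eq_σ_or_eq_τ_or_eq_ρ z with rfl | rfl | rfl | rfl <;>
    rcases K.eq_one_or_eq_σ_or_eq_τ_or_eq_ρ t with rfl | rfl | rfl | rfl <;>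
    simp (disch := decide) only [IsKleinFour.mul_self, hστ, hτσ, hσρ, hρσ, hτρ, hρτ, h1, h3,
      one_mul, mul_one, hρττ, hττρ, hτρτ, hσστ, hστσ, hττσ, hρσσ, hσσρ, hσρσ, hτσσ, hσρρ, hρρσ,
      hρρτ, hτρρ, hρσρ, hρτρ] <;>
    simp [hε_inv, hε, hε_cancel, mul_comm, mul_left_comm, mul_assoc]

theorem statement7_general {k : Type*} [Field k]
    (φ : K → K → K → kˣ)
    (h1 : ∀ x y z : K, (x = 1 ∨ y = 1 ∨ z = 1) → φ x y z = 1)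
    (h2 : ∀ x : K, (x = σ ∨ x = τ ∨ x = ρ) → φ x x x = 1 ∨ φ x x x = -1)
    (h3 : ∀ x y z : K, List.Perm [x, y, z] [σ, τ, ρ] →
      φ x y z = φ σ σ σ * φ τ τ τ * φ ρ ρ ρ) :
    IsCocycle φ ↔
      ∀ u v w : K, List.Perm [u, v, w] [σ, τ, ρ] →
        φ w v v = φ v v v * φ u v v ∧
        φ v v w = φ v v v * φ v v u ∧
        φ v w v * φ v u v = φ v v v ∧
        φ u v v * φ u u v = φ σ σ σ * φ τ τ τ * φ ρ ρ ρ ∧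
        φ v u v * φ u v u = φ σ σ σ * φ τ τ τ * φ ρ ρ ρ ∧
        φ u v v * φ v v u = 1 := by
  have hε (x : K) : φ x x x * φ x x x = 1 := by
    rcases K.eq_one_or_eq_σ_or_eq_τ_or_eq_ρ x with rfl | hx
    · rw [h1 1 1 1 (.inl rfl), one_mul]
    · rcases h2 x hx with h | h <;> simp [h]
  have hp : φ σ σ σ * φ τ τ τ * φ ρ ρ ρ * (φ σ σ σ * φ τ τ τ * φ ρ ρ ρ) = 1 := by
    rw [mul_mul_mul_comm _ (φ ρ ρ ρ), mul_mul_mul_comm (φ σ σ σ), hε, hε, hε, one_mul, one_mul]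
  refine ⟨fun hφ u v w huvw => ?_, isCocycle_of_relations h1 hε h3⟩
  exact hφ.relations_of_exponent_two IsKleinFour.exponent_two h1 (K.mul_eq_of_perm huvw) hp (hε v)
    fun x y z h => h3 x y z (h.trans huvw)

theorem statement7 {k : Type*} [Field k] (hk : ringChar k ≠ 2)
    (φ : K → K → K → kˣ)
    (h1 : ∀ x y z : K, (x = 1 ∨ y = 1 ∨ z = 1) → φ x y z = 1)
    (h2 : ∀ x : K, (x = σ ∨ x = τ ∨ x = ρ) → φ x x x = 1 ∨ φ x x x = -1)
    (h3 : ∀ x y z : K, List.Perm [x, y, z] [σ, τ, ρ] →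
      φ x y z = φ σ σ σ * φ τ τ τ * φ ρ ρ ρ) :
    IsCocycle φ ↔
      ∀ u v w : K, List.Perm [u, v, w] [σ, τ, ρ] →
        φ w v v = φ v v v * φ u v v ∧
        φ v v w = φ v v v * φ v v u ∧
        φ v w v * φ v u v = φ v v v ∧
        φ u v v * φ u u v = φ σ σ σ * φ τ τ τ * φ ρ ρ ρ ∧
        φ v u v * φ u v u = φ σ σ σ * φ τ τ τ * φ ρ ρ ρ ∧
        φ u v v * φ v v u = 1 :=
  statement7_general φ h1 h2 h3
end

section
/- Let k be a field of characteristic different from 2 and let X be a nonempty subset of {σ,τ,ρ}. Then the happy normalized 3-cocycle φ_X on C₂×C₂ with coefficients in k* is not a 3-coboundary. -/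
/-- The value `v(x, y)` taken by `φ_X` on the three arrangements `(x,y,y)`,
`(y,x,y)`, `(y,y,x)` of the multiset `{x,y,y}`, for distinct `x, y ∈ {σ,τ,ρ}`. -/
def vX {k : Type*} [Field k] (ε : K → kˣ) : K → K → kˣ := fun x y =>
  if x = σ ∧ y = τ then ε σ * ε τ * ε ρ
  else if x = τ ∧ y = σ then 1
  else if x = ρ ∧ y = τ then ε σ * ε τ * ε ρ * ε τ
  else if x = τ ∧ y = ρ then ε τ
  else if x = ρ ∧ y = σ then ε σ
  else ε σ * ε τ * ε ρ * ε σ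

/-- The happy normalized 3-cocycle `φ_X` on the Klein group, determined by the
sign function `ε` (where `ε x = -1` iff `x ∈ X`). -/
def phiX {k : Type*} [Field k] (ε : K → kˣ) : K → K → K → kˣ := fun x y z =>
  if x = 1 ∨ y = 1 ∨ z = 1 then 1
  else if x = y ∧ y = z then ε x
  else if x = y then vX ε z x
  else if y = z then vX ε x y
  else if x = z then vX ε y x
  else ε σ * ε τ * ε ρ

/-!
For an involution `x`, the coboundary `d2 g` satisfies `d2 g (x,x,x) = g(x,1) / g(1,x)` and
`d2 g (x,1,x) = g(1,x) / g(x,1)`. So a normalized coboundary takes the value `1` at `(x,x,x)`,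
whereas `φ_X (x,x,x) = ε x = -1 ≠ 1` for `x ∈ X`.
-/

section Coboundary

variable {k : Type*} [Field k] {G : Type*} [Group G]

theorem d2_self_mul_d2_one_mid (g : G → G → kˣ) {x : G} (hx : x * x = 1) :
    d2 g x x x * d2 g x 1 x = 1 := by
  simp only [d2, hx, one_mul, mul_one]
  simp [mul_comm, mul_left_comm, mul_assoc]

theorem IsCoboundary.apply_self_eq_one {φ : G → G → G → kˣ} (hφ : IsCoboundary φ)
    (hnorm : IsNormalized φ) {x : G} (hx : x * x = 1) : φ x x x = 1 := by
  obtain ⟨g, rfl⟩ := hφ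
  simpa [hnorm x x] using d2_self_mul_d2_one_mid g hx

end Coboundary

section KleinGroup

variable {k : Type*} [Field k] (ε : K → kˣ)

theorem K.mul_self (x : K) : x * x = 1 := by
  revert x
  decide

theorem phiX_isNormalized : IsNormalized (phiX ε) := by
  intro x z
  simp [phiX]

theorem phiX_self {x : K} (hx : x ≠ 1) : phiX ε x x x = ε x := by
  simp [phiX, hx]

end KleinGroup

theorem statement10 {k : Type*} [Field k] (hk : ringChar k ≠ 2)
    (X : Set K) (hX : X ⊆ {σ, τ, ρ}) (hne : X.Nonempty)
    (ε : K → kˣ) (hε : ∀ x : K, (x ∈ X → ε x = -1) ∧ (x ∉ X → ε x = 1)) :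
    ¬ IsCoboundary (phiX ε) := by
  intro hcob
  obtain ⟨x, hxX⟩ := hne
  have hx1 : x ≠ 1 := by
    rcases hX hxX with rfl | rfl | rfl <;> decide
  have hεx : ε x = 1 := by
    simpa [phiX_self ε hx1] using hcob.apply_self_eq_one (phiX_isNormalized ε) (K.mul_self x)
  rw [(hε x).1 hxX] at hεx
  exact Ring.neg_one_ne_one_of_char_ne_two hk (by simpa using congrArg Units.val hεx)
end

section
/- Let k be a field of characteristic different from 2. (i) For every a ∈ k*, the happy normalized 3-cocycle h_a on C₂×C₂ with coefficients in k* is a 3-coboundary. (ii) For every b ∈ k*, the happy normalized 3-cocycle g_b is a 3-coboundary if and only if b has a square root in k*. -/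
/-- The happy normalized 3-cocycle `h_a` on the Klein group. -/
def hA {k : Type*} [Field k] (a : kˣ) : K → K → K → kˣ := fun x y z =>
  if x ≠ 1 ∧ y = z ∧ y ≠ 1 ∧ x ≠ y then a
  else if x = y ∧ x ≠ 1 ∧ z ≠ 1 ∧ y ≠ z then a⁻¹
  else 1

/-- The happy normalized 3-cocycle `g_b` on the Klein group. -/
def gB {k : Type*} [Field k] (b : kˣ) : K → K → K → kˣ := fun x y z =>
  if (x, y, z) = (σ, τ, σ) ∨ (x, y, z) = (ρ, σ, ρ) ∨ (x, y, z) = (τ, ρ, τ) then b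
  else if (x, y, z) = (τ, σ, τ) ∨ (x, y, z) = (σ, ρ, σ) ∨ (x, y, z) = (ρ, τ, ρ) then b⁻¹
  else 1


lemma d2_telescope {k : Type*} [Field k] {G : Type*} [Group G] (g : G → G → kˣ) {s t : G}
    (hs : s * s = 1) (hst : t * s = s * t) :
    d2 g 1 1 t * d2 g s s t * d2 g s t s * d2 g t 1 1 * d2 g t s s
      = (g s (s * t) / g (s * t) s) ^ 2 := by
  simp only [d2, hs, hst, one_mul, mul_one]
  rw [← Units.val_inj]
  push_cast
  field_simp

lemma forall_K_iff {P : K → Prop} : (∀ x, P x) ↔ P 1 ∧ P σ ∧ P τ ∧ P ρ := by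
  refine ⟨fun h => ⟨h 1, h σ, h τ, h ρ⟩, fun ⟨h1, hσ, hτ, hρ⟩ x => ?_⟩
  obtain rfl | rfl | rfl | rfl : x = 1 ∨ x = σ ∨ x = τ ∨ x = ρ := by revert x; decide
  exacts [h1, hσ, hτ, hρ]

section

variable {k : Type*} [Field k]

lemma hA_eq_d2 (a : kˣ) : hA a = d2 (fun x y : K => if x = 1 ∨ y = 1 then a else 1) := by
  funext x y z
  revert x y z
  simp only [forall_K_iff]
  simp +decide [hA, d2]

lemma gB_sq_eq_d2 (d : kˣ) :
    gB (d ^ 2) = d2 (fun x y : K =>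
      if (x, y) = (σ, σ) ∨ (x, y) = (σ, ρ) ∨ (x, y) = (τ, σ) then d
      else if (x, y) = (τ, ρ) then d⁻¹ else 1) := by
  funext x y z
  revert x y z
  simp only [forall_K_iff]
  simp +decide [gB, d2, sq]

lemma exists_sq_eq_of_gB_eq_d2 {b : kˣ} {g : K → K → kˣ} (hg : gB b = d2 g) :
    ∃ d : kˣ, d ^ 2 = b := by
  refine ⟨g σ ρ / g ρ σ, ?_⟩
  have hρ : σ * τ = ρ := by decide
  calc (g σ ρ / g ρ σ) ^ 2
      = d2 g 1 1 τ * d2 g σ σ τ * d2 g σ τ σ * d2 g τ 1 1 * d2 g τ σ σ := by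
        rw [d2_telescope g (by decide) (by decide), hρ]
    _ = gB b 1 1 τ * gB b σ σ τ * gB b σ τ σ * gB b τ 1 1 * gB b τ σ σ := by rw [hg]
    _ = b := by simp +decide [gB]

end

theorem statement11_general {k : Type*} [Field k] :
    (∀ a : kˣ, IsCoboundary (hA a)) ∧
    (∀ b : kˣ, IsCoboundary (gB b) ↔ ∃ d : kˣ, d ^ 2 = b) :=
  ⟨fun a => ⟨_, hA_eq_d2 a⟩, fun _ =>
    ⟨fun ⟨_, hg⟩ => exists_sq_eq_of_gB_eq_d2 hg, fun ⟨d, hd⟩ => hd ▸ ⟨_, gB_sq_eq_d2 d⟩⟩⟩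

theorem statement11 {k : Type*} [Field k] (hk : ringChar k ≠ 2) :
    (∀ a : kˣ, IsCoboundary (hA a)) ∧
    (∀ b : kˣ, IsCoboundary (gB b) ↔ ∃ d : kˣ, d ^ 2 = b) :=
  statement11_general
end

section
/- Let k be a field of characteristic different from 2 and let X be a nonempty subset of {σ,τ,ρ}. There exists a function R: (C₂×C₂)×(C₂×C₂) → k* such that (φ_X, R) is an abelian 3-cocycle on C₂×C₂ with coefficients in k* if and only if X has even cardinality (equivalently p = ε_σ·ε_τ·ε_ρ = 1) and k contains an element i with i² = −1. -/
/-- An abelian 3-cocycle on an abelian group `G` with coefficients in `kˣ` :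
a normalized 3-cocycle `φ` together with an R-matrix `R`. -/
def IsAbelianCocycle {k : Type*} [Field k] {G : Type*} [CommGroup G]
    (φ : G → G → G → kˣ) (R : G → G → kˣ) : Prop :=
  IsCocycle φ ∧ IsNormalized φ ∧
  (∀ x y z : G, R (x * y) z * φ x z y = φ x y z * R x z * φ z x y * R y z) ∧
  (∀ x y z : G, φ x y z * R x (y * z) * φ y z x = R x y * φ y x z * R x z)



/-! ### Auxiliary machinery -/

section Aux

variable {k : Type*} [Field k]

/-- `i^n` for `n : ZMod 4`. -/
def f4 (iu : kˣ) (n : ZMod 4) : kˣ := iu ^ n.val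

lemma f4_zero (iu : kˣ) : f4 iu 0 = 1 := by simp [f4]

lemma pow4 {iu : kˣ} (hiu : iu ^ 2 = -1) : iu ^ 4 = 1 := by
  have : iu ^ 4 = (iu ^ 2) ^ 2 := by rw [← pow_mul]
  rw [this, hiu, neg_one_sq]

lemma f4_add {iu : kˣ} (hiu : iu ^ 2 = -1) (a b : ZMod 4) :
    f4 iu (a + b) = f4 iu a * f4 iu b := by
  unfold f4
  rw [ZMod.val_add, ← pow_eq_pow_mod _ (pow4 hiu), pow_add]

lemma f4_two {iu : kˣ} (hiu : iu ^ 2 = -1) : f4 iu 2 = -1 := by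
  have h : (2 : ZMod 4).val = 2 := rfl
  rw [f4, h, hiu]

/-- ZMod 4 exponent version of `vX`. -/
def vZ (E : K → ZMod 4) : K → K → ZMod 4 := fun x y =>
  if x = σ ∧ y = τ then E σ + E τ + E ρ
  else if x = τ ∧ y = σ then 0
  else if x = ρ ∧ y = τ then E σ + E τ + E ρ + E τ
  else if x = τ ∧ y = ρ then E τ
  else if x = ρ ∧ y = σ then E σ
  else E σ + E τ + E ρ + E σ

/-- ZMod 4 exponent version of `phiX`. -/
def phiZ (E : K → ZMod 4) : K → K → K → ZMod 4 := fun x y z =>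
  if x = 1 ∨ y = 1 ∨ z = 1 then 0
  else if x = y ∧ y = z then E x
  else if x = y then vZ E z x
  else if y = z then vZ E x y
  else if x = z then vZ E y x
  else E σ + E τ + E ρ

lemma Kcases : ∀ x : K, x = 1 ∨ x = σ ∨ x = τ ∨ x = ρ := by decide

lemma phiX_eq_f4 {iu : kˣ} (hiu : iu ^ 2 = -1) {ε : K → kˣ} {E : K → ZMod 4}
    (hE : ∀ x, ε x = f4 iu (E x)) (x y z : K) :
    phiX ε x y z = f4 iu (phiZ E x y z) := by
  rcases Kcases x with rfl | rfl | rfl | rfl <;>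
    rcases Kcases y with rfl | rfl | rfl | rfl <;>
      rcases Kcases z with rfl | rfl | rfl | rfl <;>
        simp (config := { decide := true }) only [phiX, phiZ, vX, vZ, hE, f4_add hiu,
          f4_zero, if_true, if_false]

/-- The bilinear-exponent R-matrix. -/
def R4 (a b : ZMod 4) : K → K → ZMod 4 := fun x y =>
  a * ((Multiplicative.toAdd x).1.val : ZMod 4) * ((Multiplicative.toAdd y).1.val : ZMod 4)
  + b * ((Multiplicative.toAdd x).2.val : ZMod 4) * ((Multiplicative.toAdd y).2.val : ZMod 4)

lemma build {iu : kˣ} (hiu : iu ^ 2 = -1) (ε : K → kˣ) (E : K → ZMod 4)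
    (R' : K → K → ZMod 4)
    (hE : ∀ x, ε x = f4 iu (E x))
    (h1 : ∀ x y z t : K, phiZ E y z t + phiZ E x (y * z) t + phiZ E x y z =
      phiZ E (x * y) z t + phiZ E x y (z * t))
    (h3 : ∀ x y z : K, R' (x * y) z + phiZ E x z y =
      phiZ E x y z + R' x z + phiZ E z x y + R' y z)
    (h4 : ∀ x y z : K, phiZ E x y z + R' x (y * z) + phiZ E y z x =
      R' x y + phiZ E y x z + R' x z) :
    IsAbelianCocycle (phiX ε) (fun x y => f4 iu (R' x y)) := by
  have hp := phiX_eq_f4 hiu hE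
  refine ⟨fun x y z t => ?_, fun x z => ?_, fun x y z => ?_, fun x y z => ?_⟩
  · rw [hp, hp, hp, hp, hp, ← f4_add hiu, ← f4_add hiu, ← f4_add hiu, h1]
  · simp [phiX]
  · dsimp only
    rw [hp, hp, hp, ← f4_add hiu, ← f4_add hiu, ← f4_add hiu, ← f4_add hiu, h3]
  · dsimp only
    rw [hp, hp, hp, ← f4_add hiu, ← f4_add hiu, ← f4_add hiu, ← f4_add hiu, h4]

lemma mem_triple {x : K} (h : x ∈ ({σ, τ, ρ} : Set K)) : x = σ ∨ x = τ ∨ x = ρ := by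
  simpa using h

end Aux

theorem statement17 {k : Type*} [Field k] (hk : ringChar k ≠ 2)
    (X : Set K) (hX : X ⊆ {σ, τ, ρ}) (hne : X.Nonempty)
    (ε : K → kˣ) (hε : ∀ x : K, (x ∈ X → ε x = -1) ∧ (x ∉ X → ε x = 1)) :
    (∃ R : K → K → kˣ, IsAbelianCocycle (phiX ε) R) ↔
      (Even X.ncard ∧ ∃ i : k, i ^ 2 = -1) := by
  have hne1 : (-1 : kˣ) ≠ 1 := by
    intro h
    have h' : (-1 : k) = 1 := by
      have := congrArg Units.val h
      simpa using this
    have h2 : ((2 : ℕ) : k) = 0 := by push_cast; linear_combination -h'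
    haveI := ringChar.charP k
    have hdvd : ringChar k ∣ 2 := (CharP.cast_eq_zero_iff k (ringChar k) 2).mp h2
    rcases (Nat.dvd_prime Nat.prime_two).mp hdvd with h1 | h1
    · exact CharP.char_ne_one k (ringChar k) h1
    · exact hk h1
  have h1X : (1 : K) ∉ X := by
    intro h
    rcases mem_triple (hX h) with h' | h' | h' <;> revert h' <;> decide
  constructor
  · rintro ⟨R, hc, hn, hH1, hH2⟩
    have hn' : ∀ x z : K, phiX ε x 1 z = 1 := hn
    have φ1 : ∀ y z : K, phiX ε 1 y z = 1 := fun y z => by simp [phiX]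
    have hR1 : ∀ z : K, R 1 z = 1 := by
      intro z
      have h := hH1 1 1 z
      simp only [one_mul, mul_one, φ1, hn'] at h
      nth_rewrite 1 [← mul_one (R 1 z)] at h
      exact (mul_left_cancel h).symm
    have hRx1 : ∀ x : K, R x 1 = 1 := by
      intro x
      have h := hH2 x 1 1
      simp only [one_mul, mul_one, φ1, hn'] at h
      nth_rewrite 1 [← mul_one (R x 1)] at h
      exact (mul_left_cancel h).symm
    -- the square root of -1
    obtain ⟨g, hg⟩ := hne
    have hg3 := mem_triple (hX hg)
    have hεg : ε g = -1 := (hε g).1 hg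
    have φggg : phiX ε g g g = ε g := by
      rcases hg3 with h | h | h <;> subst h <;>
        · unfold phiX
          rw [if_neg (by decide), if_pos ⟨rfl, rfl⟩]
    have hgg : g * g = 1 := by
      rcases hg3 with h | h | h <;> subst h <;> decide
    have hq := hH2 g g g
    rw [hgg, hRx1, φggg, hεg] at hq
    have hq' := congrArg Units.val hq
    simp only [Units.val_mul, Units.val_neg, Units.val_one] at hq'
    -- p = 1
    have e1 : σ * σ = (1 : K) := by decide
    have e2 : τ * τ = (1 : K) := by decide
    have v1 : phiX ε σ τ σ = 1 := by
      unfold phiX vX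
      rw [if_neg (by decide), if_neg (by decide), if_neg (by decide), if_neg (by decide),
        if_pos rfl, if_neg (by decide), if_pos ⟨rfl, rfl⟩]
    have v2 : phiX ε σ σ τ = 1 := by
      unfold phiX vX
      rw [if_neg (by decide), if_neg (by decide), if_pos rfl,
        if_neg (by decide), if_pos ⟨rfl, rfl⟩]
    have v3 : phiX ε τ σ σ = 1 := by
      unfold phiX vX
      rw [if_neg (by decide), if_neg (by decide), if_neg (by decide), if_pos rfl,
        if_neg (by decide), if_pos ⟨rfl, rfl⟩]
    have w1 : phiX ε σ τ τ = ε σ * ε τ * ε ρ := by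
      unfold phiX vX
      rw [if_neg (by decide), if_neg (by decide), if_neg (by decide), if_pos rfl,
        if_pos ⟨rfl, rfl⟩]
    have w2 : phiX ε τ τ σ = ε σ * ε τ * ε ρ := by
      unfold phiX vX
      rw [if_neg (by decide), if_neg (by decide), if_pos rfl, if_pos ⟨rfl, rfl⟩]
    have w3 : phiX ε τ σ τ = ε σ * ε τ * ε ρ := by
      unfold phiX vX
      rw [if_neg (by decide), if_neg (by decide), if_neg (by decide), if_neg (by decide),
        if_pos rfl, if_pos ⟨rfl, rfl⟩]
    have h1 := hH1 σ σ τ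
    rw [e1, hR1, v1, v2, v3] at h1
    have h2 := hH2 σ τ τ
    rw [e2, hRx1, w1, w2, w3] at h2
    have h1' := congrArg Units.val h1
    have h2' := congrArg Units.val h2
    simp only [Units.val_mul, Units.val_one, one_mul, mul_one] at h1' h2'
    have hne0 : ((ε σ : k) * (ε τ : k) * (ε ρ : k)) ≠ 0 :=
      mul_ne_zero (mul_ne_zero (Units.ne_zero _) (Units.ne_zero _)) (Units.ne_zero _)
    have hP : ε σ * ε τ * ε ρ = 1 := by
      apply Units.ext
      push_cast
      apply mul_left_cancel₀ hne0
      rw [mul_one]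
      linear_combination h2' - ((ε σ : k) * (ε τ : k) * (ε ρ : k)) * h1'
    refine ⟨?_, ⟨(R g g : k), by linear_combination hq'⟩⟩
    -- evenness
    by_cases hσ : σ ∈ X <;> by_cases hτ : τ ∈ X <;> by_cases hρ : ρ ∈ X
    · -- all three: contradiction
      rw [(hε σ).1 hσ, (hε τ).1 hτ, (hε ρ).1 hρ] at hP
      simp at hP
      exact absurd hP hne1
    · have hXeq : X = ({σ, τ} : Set K) := by
        ext x
        constructor
        · intro hx
          rcases mem_triple (hX hx) with h | h | h
          · exact Or.inl h
          · exact Or.inr h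
          · exact absurd (h ▸ hx) hρ
        · rintro (h | h) <;> subst h
          · exact hσ
          · exact hτ
      rw [hXeq, Set.ncard_pair (by decide : σ ≠ τ)]
      exact ⟨1, rfl⟩
    · have hXeq : X = ({σ, ρ} : Set K) := by
        ext x
        constructor
        · intro hx
          rcases mem_triple (hX hx) with h | h | h
          · exact Or.inl h
          · exact absurd (h ▸ hx) hτ
          · exact Or.inr h
        · rintro (h | h) <;> subst h
          · exact hσ
          · exact hρ
      rw [hXeq, Set.ncard_pair (by decide : σ ≠ ρ)]
      exact ⟨1, rfl⟩
    · rw [(hε σ).1 hσ, (hε τ).2 hτ, (hε ρ).2 hρ] at hP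
      simp at hP
      exact absurd hP hne1
    · have hXeq : X = ({τ, ρ} : Set K) := by
        ext x
        constructor
        · intro hx
          rcases mem_triple (hX hx) with h | h | h
          · exact absurd (h ▸ hx) hσ
          · exact Or.inl h
          · exact Or.inr h
        · rintro (h | h) <;> subst h
          · exact hτ
          · exact hρ
      rw [hXeq, Set.ncard_pair (by decide : τ ≠ ρ)]
      exact ⟨1, rfl⟩
    · rw [(hε σ).2 hσ, (hε τ).1 hτ, (hε ρ).2 hρ] at hP
      simp at hP
      exact absurd hP hne1
    · rw [(hε σ).2 hσ, (hε τ).2 hτ, (hε ρ).1 hρ] at hP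
      simp at hP
      exact absurd hP hne1
    · rcases hg3 with h | h | h <;> subst h
      · exact absurd hg hσ
      · exact absurd hg hτ
      · exact absurd hg hρ
  · rintro ⟨hev, i, hi⟩
    have hi0 : i ≠ 0 := by
      intro h
      rw [h] at hi
      simp only [ne_eq, OfNat.ofNat_ne_zero, not_false_eq_true, zero_pow] at hi
      exact one_ne_zero (neg_eq_zero.mp hi.symm)
    set iu : kˣ := Units.mk0 i hi0 with hiudef
    have hiu : iu ^ 2 = -1 := by
      apply Units.ext
      push_cast
      exact hi
    by_cases hσ : σ ∈ X <;> by_cases hτ : τ ∈ X <;> by_cases hρ : ρ ∈ X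
    · -- X = {σ, τ, ρ} : odd, contradiction
      have hXeq : X = ({σ, τ, ρ} : Set K) := by
        ext x
        constructor
        · intro hx; exact hX hx
        · rintro (h | h | h) <;> subst h
          · exact hσ
          · exact hτ
          · exact hρ
      rw [hXeq] at hev
      have hn3 : ({σ, τ, ρ} : Set K).ncard = 3 := by
        rw [Set.ncard_insert_of_notMem
            (by simp only [Set.mem_insert_iff, Set.mem_singleton_iff]; decide)
            (Set.toFinite _),
          Set.ncard_pair (by decide : τ ≠ ρ)]
      rw [hn3] at hev
      exact absurd hev (by decide)
    · -- X = {σ, τ}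
      have hE : ∀ x : K, ε x = f4 iu (if x = σ ∨ x = τ then (2 : ZMod 4) else 0) := by
        intro x
        rcases Kcases x with h | h | h | h <;> subst h
        · rw [if_neg (by decide), f4_zero]; exact (hε 1).2 h1X
        · rw [if_pos (Or.inl rfl), f4_two hiu]; exact (hε σ).1 hσ
        · rw [if_pos (Or.inr rfl), f4_two hiu]; exact (hε τ).1 hτ
        · rw [if_neg (by decide), f4_zero]; exact (hε ρ).2 hρ
      exact ⟨_, build hiu ε (fun x => if x = σ ∨ x = τ then 2 else 0) (R4 1 1) hE
        (by decide) (by decide) (by decide)⟩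
    · -- X = {σ, ρ}
      have hE : ∀ x : K, ε x = f4 iu (if x = σ ∨ x = ρ then (2 : ZMod 4) else 0) := by
        intro x
        rcases Kcases x with h | h | h | h <;> subst h
        · rw [if_neg (by decide), f4_zero]; exact (hε 1).2 h1X
        · rw [if_pos (Or.inl rfl), f4_two hiu]; exact (hε σ).1 hσ
        · rw [if_neg (by decide), f4_zero]; exact (hε τ).2 hτ
        · rw [if_pos (Or.inr rfl), f4_two hiu]; exact (hε ρ).1 hρ
      exact ⟨_, build hiu ε (fun x => if x = σ ∨ x = ρ then 2 else 0) (R4 1 0) hE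
        (by decide) (by decide) (by decide)⟩
    · -- X = {σ} : odd
      have hXeq : X = ({σ} : Set K) := by
        ext x
        constructor
        · intro hx
          rcases mem_triple (hX hx) with h | h | h
          · exact h
          · exact absurd (h ▸ hx) hτ
          · exact absurd (h ▸ hx) hρ
        · intro h
          rw [h]
          exact hσ
      rw [hXeq, Set.ncard_singleton] at hev
      exact absurd hev (by decide)
    · -- X = {τ, ρ}
      have hE : ∀ x : K, ε x = f4 iu (if x = τ ∨ x = ρ then (2 : ZMod 4) else 0) := by
        intro x
        rcases Kcases x with h | h | h | h <;> subst h
        · rw [if_neg (by decide), f4_zero]; exact (hε 1).2 h1X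
        · rw [if_neg (by decide), f4_zero]; exact (hε σ).2 hσ
        · rw [if_pos (Or.inl rfl), f4_two hiu]; exact (hε τ).1 hτ
        · rw [if_pos (Or.inr rfl), f4_two hiu]; exact (hε ρ).1 hρ
      exact ⟨_, build hiu ε (fun x => if x = τ ∨ x = ρ then 2 else 0) (R4 0 1) hE
        (by decide) (by decide) (by decide)⟩
    · -- X = {τ} : odd
      have hXeq : X = ({τ} : Set K) := by
        ext x
        constructor
        · intro hx
          rcases mem_triple (hX hx) with h | h | h
          · exact absurd (h ▸ hx) hσ
          · exact h
          · exact absurd (h ▸ hx) hρ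
        · intro h
          rw [h]
          exact hτ
      rw [hXeq, Set.ncard_singleton] at hev
      exact absurd hev (by decide)
    · -- X = {ρ} : odd
      have hXeq : X = ({ρ} : Set K) := by
        ext x
        constructor
        · intro hx
          rcases mem_triple (hX hx) with h | h | h
          · exact absurd (h ▸ hx) hσ
          · exact absurd (h ▸ hx) hτ
          · exact h
        · intro h
          rw [h]
          exact hρ
      rw [hXeq, Set.ncard_singleton] at hev
      exact absurd hev (by decide)
    · -- X empty : contradiction with hne
      obtain ⟨g, hg⟩ := hne
      rcases mem_triple (hX hg) with h | h | h <;> subst h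
      · exact absurd hg hσ
      · exact absurd hg hτ
      · exact absurd hg hρ
end

section
/- Let k be a field, n a positive integer, and q ∈ k* a primitive n-th root of unity. Then the function φ on the cyclic group ℤ/nℤ defined by φ(x, y, z) = q^(x̄·ȳ·z̄), where x̄ ∈ {0,1,…,n−1} denotes the representative of x ∈ ℤ/nℤ, is a well-defined normalized 3-cocycle on ℤ/nℤ with coefficients in k*. Moreover, φ is a 3-coboundary if and only if q^(n(n−1)/2) = 1. -/
/-!
Writing `ψ` for the additive character `a ↦ q ^ a.val` of `ZMod n`, we have
`φ(x, y, z) = ψ(xyz)`, and the cocycle identity is the additive identity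
`yzt + x(y+z)t + xyz = (x+y)zt + xy(z+t)`. Every coboundary `δg` satisfies `∏_y δg(a, y, b) = 1`,
while `∏_y φ(1, y, 1) = q ^ (0 + 1 + ⋯ + (n-1))`; this gives one direction. Conversely, if
`q ^ (n(n-1)/2) = 1` then `n ∣ n(n-1)/2` since `q` is primitive, so `n` is odd, `2` is a unit in
`ZMod n`, and `φ = δg` for `g(x, y) = ψ(x y² / 2)`.
-/

theorem IsCoboundary.prod_eq_one {k : Type*} [Field k] {G : Type*} [Group G] [Fintype G]
    {φ : G → G → G → kˣ} (hφ : IsCoboundary φ) (a b : G) : ∏ y, φ a y b = 1 := by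
  obtain ⟨g, rfl⟩ := hφ
  simp only [d2, Finset.prod_mul_distrib, Finset.prod_inv_distrib]
  rw [Fintype.prod_equiv (Equiv.mulLeft a) (fun y => g (a * y) b) (g · b) fun _ => rfl,
    Fintype.prod_equiv (Equiv.mulRight b) (fun y => g a (y * b)) (g a) fun _ => rfl]
  simp

section TrilinearCocycle

variable {k : Type*} [Field k] {A : Type*}

def trilinearCocycle [Ring A] (ψ : AddChar A kˣ) :
    Multiplicative A → Multiplicative A → Multiplicative A → kˣ :=
  fun x y z => ψ (x.toAdd * y.toAdd * z.toAdd)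

theorem isCocycle_trilinearCocycle [Ring A] (ψ : AddChar A kˣ) :
    IsCocycle (trilinearCocycle ψ) := by
  intro x y z t
  simp only [trilinearCocycle, toAdd_mul, ← AddChar.map_add_eq_mul, mul_add, add_mul, mul_assoc]
  congr 1
  abel

theorem isNormalized_trilinearCocycle [Ring A] (ψ : AddChar A kˣ) :
    IsNormalized (trilinearCocycle ψ) := by
  intro x z
  simp [trilinearCocycle]

theorem isCoboundary_trilinearCocycle [CommRing A] (ψ : AddChar A kˣ) (h2 : IsUnit (2 : A)) :
    IsCoboundary (trilinearCocycle ψ) := by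
  -- `δ(x, y ↦ c x y²) = 2c xyz` in any commutative ring
  refine ⟨fun x y => ψ (↑h2.unit⁻¹ * x.toAdd * y.toAdd ^ 2), ?_⟩
  funext x y z
  simp only [trilinearCocycle, d2, toAdd_mul, ← AddChar.map_neg_eq_inv, ← AddChar.map_add_eq_mul]
  congr 1
  linear_combination -(x.toAdd * y.toAdd * z.toAdd) * h2.val_inv_mul

end TrilinearCocycle

theorem ZMod.sum_val (n : ℕ) [NeZero n] : ∑ a : ZMod n, a.val = n * (n - 1) / 2 := by
  rw [← Finset.sum_range_id]
  exact Finset.sum_nbij' ZMod.val (↑) (fun a _ => Finset.mem_range.2 a.val_lt)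
    (fun _ _ => Finset.mem_univ _) (fun a _ => ZMod.natCast_zmod_val a)
    (fun i hi => ZMod.val_cast_of_lt (Finset.mem_range.1 hi)) (fun _ _ => rfl)

theorem AddChar.prod_zmodChar {C : Type*} [CommMonoid C] (n : ℕ) [NeZero n] {ζ : C}
    (hζ : ζ ^ n = 1) : ∏ a : ZMod n, zmodChar n hζ a = ζ ^ (n * (n - 1) / 2) := by
  simp only [zmodChar_apply, Finset.prod_pow_eq_pow_sum, ZMod.sum_val]

theorem Nat.odd_of_dvd_mul_pred_div_two {n : ℕ} (hn : 0 < n) (h : n ∣ n * (n - 1) / 2) :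
    Odd n := by
  by_contra heven
  obtain ⟨r, rfl⟩ := Nat.not_odd_iff_even.1 heven
  have hr : 0 < r := by omega
  have : (r + r) * (r + r - 1) / 2 = r * (r + r - 1) := by
    rw [← two_mul, mul_assoc, Nat.mul_div_cancel_left _ two_pos]
  rw [this, ← two_mul] at h
  have := Nat.dvd_of_mul_dvd_mul_right hr (by simpa [mul_comm] using h)
  omega

theorem statement19 (k : Type*) [Field k] (n : ℕ) (hn : 0 < n) (q : kˣ)
    (hq1 : q ^ n = 1) (hq2 : ∀ m : ℕ, 0 < m → m < n → q ^ m ≠ 1)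
    (φ : Multiplicative (ZMod n) → Multiplicative (ZMod n) → Multiplicative (ZMod n) → kˣ)
    (hφ : ∀ x y z : Multiplicative (ZMod n),
      φ x y z = q ^ ((Multiplicative.toAdd x).val * (Multiplicative.toAdd y).val
        * (Multiplicative.toAdd z).val)) :
    IsCocycle φ ∧ IsNormalized φ ∧
    (IsCoboundary φ ↔ q ^ (n * (n - 1) / 2) = 1) := by
  have : NeZero n := ⟨hn.ne'⟩
  obtain rfl : φ = trilinearCocycle (AddChar.zmodChar n hq1) := by
    funext x y z
    rw [hφ, trilinearCocycle, ← AddChar.zmodChar_apply' hq1]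
    push_cast [ZMod.natCast_zmod_val]
    rfl
  refine ⟨isCocycle_trilinearCocycle _, isNormalized_trilinearCocycle _,
    fun hcob => ?_, fun hq => ?_⟩
  · calc q ^ (n * (n - 1) / 2)
        _ = ∏ a : ZMod n, AddChar.zmodChar n hq1 a := (AddChar.prod_zmodChar n hq1).symm
        _ = ∏ y, trilinearCocycle (AddChar.zmodChar n hq1) (.ofAdd 1) y (.ofAdd 1) :=
          Fintype.prod_equiv Multiplicative.ofAdd _ _ fun a => by simp [trilinearCocycle]
        _ = 1 := hcob.prod_eq_one _ _
  · have hdvd := ((IsPrimitiveRoot.mk_of_lt q hn hq1 hq2).pow_eq_one_iff_dvd _).1 hq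
    refine isCoboundary_trilinearCocycle _ ?_
    exact_mod_cast (ZMod.isUnit_iff_coprime 2 n).2
      (Nat.coprime_two_left.2 (Nat.odd_of_dvd_mul_pred_div_two hn hdvd))
end
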